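/- For every n ≥ 3, the number of diagrams of size n in T̃_n with n−1 rows and n−1 columns is c_n(n−1,n−1) = (2/9)·(n³−n−6)·(2n−5)!!; as an integer identity, 9·c_n(n−1,n−1) = 2·(n³−n−6)·(2n−5)!!. -/

import Mathlib

/-- Diagram-counting numbers `c n k l`: `c 1 1 1 = 1`, zero off `(1,1)` at `n = 1`,
zero whenever `k ≤ 0` or `l ≤ 0`, and satisfying the recurrence
`c (n+1) k l = k * c n k (l-1) + l * c n (k-1) l + (k+l-3) * c n (k-1) (l-1)`. -/
def c : ℕ → ℤ → ℤ → ℤ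
  | 0, _, _ => 0
  | 1, k, l => if k = 1 ∧ l = 1 then 1 else 0
  | n + 2, k, l =>
      if k ≤ 0 ∨ l ≤ 0 then 0
      else k * c (n + 1) k (l - 1) + l * c (n + 1) (k - 1) l
            + (k + l - 3) * c (n + 1) (k - 1) (l - 1)

/-!
Since `c n k l = 0` as soon as `k > n` or `l > n`, at the corner `(n, n)` of `Δ_n` the
recurrence only links the three entries `c n n n`, `c n n (n-1)` (equal to `c n (n-1) n` by the symmetry `c n k l = c n l k`) and
`c n (n-1) (n-1)`, and these can be solved one after another by induction on `n`.
-/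

open Nat

theorem c_symm : ∀ (n : ℕ) (k l : ℤ), c n k l = c n l k
  | 0, _, _ => rfl
  | 1, k, l => by simp only [c, and_comm]
  | n + 2, k, l => by
      simp only [c, or_comm, c_symm (n + 1) k (l - 1), c_symm (n + 1) (k - 1) l,
        c_symm (n + 1) (k - 1) (l - 1)]
      split_ifs <;> ring

theorem c_eq_zero_of_lt_left : ∀ (n : ℕ) (k l : ℤ), (n : ℤ) < k → c n k l = 0
  | 0, _, _, _ => rfl
  | 1, k, l, h => by simp only [c]; split_ifs <;> omega
  | n + 2, k, l, h => by
      have h₁ := c_eq_zero_of_lt_left (n + 1) k (l - 1) (by push_cast at h ⊢; omega)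
      have h₂ := c_eq_zero_of_lt_left (n + 1) (k - 1) l (by push_cast at h ⊢; omega)
      have h₃ := c_eq_zero_of_lt_left (n + 1) (k - 1) (l - 1) (by push_cast at h ⊢; omega)
      simp [c, h₁, h₂, h₃]

theorem c_eq_zero_of_lt_right (n : ℕ) (k l : ℤ) (h : (n : ℤ) < l) : c n k l = 0 := by
  rw [c_symm]
  exact c_eq_zero_of_lt_left n l k h

theorem c_succ {n : ℕ} (hn : 1 ≤ n) {k l : ℤ} (hk : 0 < k) (hl : 0 < l) :
    c (n + 1) k l = k * c n k (l - 1) + l * c n (k - 1) l + (k + l - 3) * c n (k - 1) (l - 1) := by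
  obtain ⟨m, rfl⟩ : ∃ m, n = m + 1 := ⟨n - 1, by omega⟩
  rw [c, if_neg (by omega)]

section CornerRecurrences

variable {n : ℕ} (hn : 1 ≤ n)
include hn

theorem c_succ_self :
    c (n + 1) ((n : ℤ) + 1) ((n : ℤ) + 1) = (2 * n - 1) * c n n n := by
  rw [c_succ hn (by omega) (by omega), add_sub_cancel_right,
    c_eq_zero_of_lt_left n _ _ (by omega), c_eq_zero_of_lt_right n _ _ (by omega)]
  ring

theorem c_succ_self_pred :
    c (n + 1) ((n : ℤ) + 1) n = n * c n n n + (2 * n - 2) * c n n ((n : ℤ) - 1) := by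
  rw [c_succ hn (by omega) (by omega), add_sub_cancel_right,
    c_eq_zero_of_lt_left n _ _ (by omega)]
  ring

theorem c_succ_pred_pred :
    c (n + 1) n n = 2 * n * c n n ((n : ℤ) - 1) + (2 * n - 3) * c n ((n : ℤ) - 1) ((n : ℤ) - 1) := by
  rw [c_succ hn (by omega) (by omega), c_symm n ((n : ℤ) - 1) n]
  ring

end CornerRecurrences

theorem doubleFactorial_two_mul_succ_sub {n k : ℕ} (h : k ≤ 2 * n) :
    ((2 * (n + 1) - k)‼ : ℤ) = (2 * n + 2 - k) * (2 * n - k)‼ := by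
  rw [show 2 * (n + 1) - k = (2 * n - k) + 2 by omega, Nat.doubleFactorial_add_two]
  push_cast [h]
  ring

theorem c_self {n : ℕ} (hn : 2 ≤ n) : c n n n = (2 * n - 3)‼ := by
  induction n, hn using Nat.le_induction with
  | base => decide
  | succ n hn ih =>
    push_cast
    rw [c_succ_self (by omega), ih, doubleFactorial_two_mul_succ_sub (by omega)]
    ring

theorem three_mul_c_self_pred {n : ℕ} (hn : 2 ≤ n) :
    3 * c n n ((n : ℤ) - 1) = (n + 1) * (2 * n - 3)‼ := by
  induction n, hn using Nat.le_induction with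
  | base => decide
  | succ n hn ih =>
    push_cast
    rw [add_sub_cancel_right, c_succ_self_pred (by omega), c_self hn,
      doubleFactorial_two_mul_succ_sub (by omega)]
    linear_combination (2 * (n : ℤ) - 2) * ih

/-- For every n ≥ 3, 9·c_n(n−1,n−1) = 2·(n³−n−6)·(2n−5)!!. -/
theorem stmt5 (n : ℕ) (hn : 3 ≤ n) :
    9 * c n ((n : ℤ) - 1) ((n : ℤ) - 1)
      = 2 * ((n : ℤ) ^ 3 - (n : ℤ) - 6) * (Nat.doubleFactorial (2 * n - 5) : ℤ) := by
  induction n, hn using Nat.le_induction with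
  | base => decide
  | succ n hn ih =>
    have hsub := three_mul_c_self_pred (n := n) (by omega)
    rw [show 2 * n - 3 = 2 * (n + 1) - 5 by omega, doubleFactorial_two_mul_succ_sub (by omega)] at hsub
    push_cast
    rw [add_sub_cancel_right, c_succ_pred_pred (by omega),
      doubleFactorial_two_mul_succ_sub (by omega)]
    linear_combination (6 * (n : ℤ)) * hsub + (2 * (n : ℤ) - 3) * ih
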